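/- Consider the multilayer NODE system in which, for each layer i+1, the scalar activation φ^{i+1} is incrementally sector bounded by [α^{i+1}, β^{i+1}] on ℝ, and suppose there exist a symmetric positive definite P ∈ ℝ^{n×n} and γ > 0 such that for all v⁰ ∈ ℝⁿ and vⁱ ∈ ℝ^{mᵢ}, i = 1,…,k: ⟨v⁰, (AᵀP + PA + γP)·v⁰⟩ + 2·⟨v⁰, P·W^{k+1}·vᵏ⟩ − 2·Σ_{i=0}^{k−1} ⟨v^{i+1} − α^{i+1}·W^{i+1}·vⁱ, v^{i+1} − β^{i+1}·W^{i+1}·vⁱ⟩ ≤ 0. Then for any two solutions x₁, x₂ of the multilayer NODE system, the function V(t) = ⟨x₁(t) − x₂(t), P·(x₁(t) − x₂(t))⟩ is differentiable on [0,∞) and satisfies V′(t) ≤ −γ·V(t) for all t ≥ 0. -/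

import Mathlib

open Matrix

/-- Layer maps of a feedforward neural network whose layer `i+1` applies the scalar
activation `φ i` componentwise. -/
noncomputable def nnLayer (m : ℕ → ℕ)
    (W : (i : ℕ) → Matrix (Fin (m (i + 1))) (Fin (m i)) ℝ)
    (b : (i : ℕ) → Fin (m (i + 1)) → ℝ)
    (φ : ℕ → ℝ → ℝ) :
    (i : ℕ) → (Fin (m 0) → ℝ) → Fin (m i) → ℝ
  | 0, x => x
  | i + 1, x => fun j => φ i ((W i).mulVec (nnLayer m W b φ i x) j + b i j)

/-!
Write `e = x₁ - x₂` and `Δᵢ = wⁱ(x₁) - wⁱ(x₂)` for the layer differences, so that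
`ė = A e + Wk Δₖ` and, `P` being symmetric, `V' = 2 ⟨e, P ė⟩`. Evaluating the matrix inequality at
`v = Δ` bounds `V' + γ V` by twice the sum of the sector terms `⟨Δᵢ₊₁ - αᵢ Wᵢ Δᵢ, Δᵢ₊₁ - βᵢ Wᵢ Δᵢ⟩`.
Since `Δᵢ₊₁` is the difference of the activations at two pre-activations whose difference is
`Wᵢ Δᵢ` (the biases cancel), the incremental sector bound makes each of these terms nonpositive.
-/

section Derivatives

variable {𝕜 : Type*} [NontriviallyNormedField 𝕜] {ι κ : Type*} [Fintype ι]
  {f g : 𝕜 → ι → 𝕜} {f' g' : ι → 𝕜} {t : 𝕜}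

theorem HasDerivAt.dotProduct (hf : HasDerivAt f f' t) (hg : HasDerivAt g g' t) :
    HasDerivAt (fun s => f s ⬝ᵥ g s) (f' ⬝ᵥ g t + f t ⬝ᵥ g') t :=
  (HasDerivAt.fun_sum (u := Finset.univ) fun j _ =>
    (hasDerivAt_pi.mp hf j).mul (hasDerivAt_pi.mp hg j)).congr_deriv Finset.sum_add_distrib

theorem HasDerivAt.mulVec (M : Matrix κ ι 𝕜) (hf : HasDerivAt f f' t) :
    HasDerivAt (fun s => M *ᵥ f s) (M *ᵥ f') t :=
  hasDerivAt_pi.mpr fun i =>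
    HasDerivAt.fun_sum (u := Finset.univ) fun j _ => (hasDerivAt_pi.mp hf j).const_mul (M i j)

end Derivatives

namespace Matrix

variable {ι R : Type*} [Fintype ι]

theorem IsSymm.dotProduct_mulVec_comm [CommSemiring R] {M : Matrix ι ι R} (hM : M.IsSymm)
    (x y : ι → R) : x ⬝ᵥ M *ᵥ y = y ⬝ᵥ M *ᵥ x := by
  rw [dotProduct_mulVec, ← mulVec_transpose, hM.eq, dotProduct_comm]

theorem IsSymm.dotProduct_lyapunov_mulVec [CommRing R] {A P : Matrix ι ι R} (hP : P.IsSymm)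
    (γ : R) (x : ι → R) :
    x ⬝ᵥ (Aᵀ * P + P * A + γ • P) *ᵥ x = 2 * (x ⬝ᵥ P *ᵥ (A *ᵥ x)) + γ * (x ⬝ᵥ P *ᵥ x) := by
  have hAP : x ⬝ᵥ (Aᵀ * P) *ᵥ x = x ⬝ᵥ P *ᵥ (A *ᵥ x) := by
    rw [← mulVec_mulVec, dotProduct_mulVec, vecMul_transpose, hP.dotProduct_mulVec_comm]
  rw [add_mulVec, add_mulVec, dotProduct_add, dotProduct_add, hAP, ← mulVec_mulVec, smul_mulVec,
    dotProduct_smul, smul_eq_mul]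
  ring

theorem IsSymm.hasDerivAt_dotProduct_mulVec_self {𝕜 : Type*} [NontriviallyNormedField 𝕜]
    {P : Matrix ι ι 𝕜} (hP : P.IsSymm) {f : 𝕜 → ι → 𝕜} {f' : ι → 𝕜} {t : 𝕜} (hf : HasDerivAt f f' t) :
    HasDerivAt (fun s => f s ⬝ᵥ P *ᵥ f s) (2 * (f t ⬝ᵥ P *ᵥ f')) t :=
  (hf.dotProduct (hf.mulVec P)).congr_deriv (by rw [hP.dotProduct_mulVec_comm f', two_mul])

end Matrix

def IsIncrementallySectorBounded (φ : ℝ → ℝ) (α β : ℝ) : Prop :=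
  ∀ a c, (φ a - φ c - α * (a - c)) * (φ a - φ c - β * (a - c)) ≤ 0

theorem IsIncrementallySectorBounded.dotProduct_comp_sub_nonpos {ι : Type*} [Fintype ι]
    {φ : ℝ → ℝ} {α β : ℝ} (h : IsIncrementallySectorBounded φ α β) (u w : ι → ℝ) :
    (φ ∘ u - φ ∘ w - α • (u - w)) ⬝ᵥ (φ ∘ u - φ ∘ w - β • (u - w)) ≤ 0 :=
  Finset.sum_nonpos fun j _ => h (u j) (w j)

section Network

variable {m : ℕ → ℕ} {W : (i : ℕ) → Matrix (Fin (m (i + 1))) (Fin (m i)) ℝ}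
  {b : (i : ℕ) → Fin (m (i + 1)) → ℝ} {φ : ℕ → ℝ → ℝ}

theorem nnLayer_sector_sum_nonpos {α β : ℕ → ℝ}
    (hsec : ∀ i, IsIncrementallySectorBounded (φ i) (α i) (β i)) (k : ℕ) (x y : Fin (m 0) → ℝ) :
    ∑ i ∈ Finset.range k,
      (nnLayer m W b φ (i + 1) x - nnLayer m W b φ (i + 1) y
          - α i • W i *ᵥ (nnLayer m W b φ i x - nnLayer m W b φ i y)) ⬝ᵥ
        (nnLayer m W b φ (i + 1) x - nnLayer m W b φ (i + 1) y
          - β i • W i *ᵥ (nnLayer m W b φ i x - nnLayer m W b φ i y)) ≤ 0 := by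
  refine Finset.sum_nonpos fun i _ => ?_
  have hpre : W i *ᵥ (nnLayer m W b φ i x - nnLayer m W b φ i y)
      = (W i *ᵥ nnLayer m W b φ i x + b i) - (W i *ᵥ nnLayer m W b φ i y + b i) := by
    rw [mulVec_sub, add_sub_add_right_eq_sub]
  rw [hpre]
  exact (hsec i).dotProduct_comp_sub_nonpos _ _

end Network

theorem multilayer_node_lyapunov_decay_general
    (k : ℕ) (m : ℕ → ℕ)
    (A : Matrix (Fin (m 0)) (Fin (m 0)) ℝ)
    (W : (i : ℕ) → Matrix (Fin (m (i + 1))) (Fin (m i)) ℝ)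
    (b : (i : ℕ) → Fin (m (i + 1)) → ℝ)
    (Wk : Matrix (Fin (m 0)) (Fin (m k)) ℝ) (bk : Fin (m 0) → ℝ)
    (φ : ℕ → ℝ → ℝ) (α β : ℕ → ℝ)
    (hsec : ∀ i, ∀ a c : ℝ,
      (φ i a - φ i c - α i * (a - c)) * (φ i a - φ i c - β i * (a - c)) ≤ 0)
    (P : Matrix (Fin (m 0)) (Fin (m 0)) ℝ) (hP : P.PosDef)
    (γ : ℝ)
    (hQF : ∀ v : (i : ℕ) → Fin (m i) → ℝ,
      v 0 ⬝ᵥ (Aᵀ * P + P * A + γ • P).mulVec (v 0)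
        + 2 * (v 0 ⬝ᵥ P.mulVec (Wk.mulVec (v k)))
        - 2 * ∑ i ∈ Finset.range k,
            (v (i + 1) - α i • (W i).mulVec (v i)) ⬝ᵥ
              (v (i + 1) - β i • (W i).mulVec (v i)) ≤ 0)
    (x₁ x₂ : ℝ → Fin (m 0) → ℝ)
    (hx₁ : ∀ t, 0 ≤ t → HasDerivAt x₁
      (A.mulVec (x₁ t) + (Wk.mulVec (nnLayer m W b φ k (x₁ t)) + bk)) t)
    (hx₂ : ∀ t, 0 ≤ t → HasDerivAt x₂
      (A.mulVec (x₂ t) + (Wk.mulVec (nnLayer m W b φ k (x₂ t)) + bk)) t) :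
    ∃ V' : ℝ → ℝ,
      (∀ t, 0 ≤ t →
        HasDerivAt (fun s => (x₁ s - x₂ s) ⬝ᵥ P.mulVec (x₁ s - x₂ s)) (V' t) t) ∧
      (∀ t, 0 ≤ t →
        V' t ≤ -γ * ((x₁ t - x₂ t) ⬝ᵥ P.mulVec (x₁ t - x₂ t))) := by
  set Δ : (i : ℕ) → ℝ → Fin (m i) → ℝ :=
    fun i s => nnLayer m W b φ i (x₁ s) - nnLayer m W b φ i (x₂ s) with hΔ
  have hPsymm : P.IsSymm := isHermitian_iff_isSymm.mp hP.isHermitian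
  have herr : ∀ t, 0 ≤ t → HasDerivAt (fun s => x₁ s - x₂ s) (A *ᵥ Δ 0 t + Wk *ᵥ Δ k t) t := by
    intro t ht
    refine ((hx₁ t ht).sub (hx₂ t ht)).congr_deriv ?_
    simp only [hΔ, nnLayer, mulVec_sub]
    abel
  refine ⟨fun t => 2 * (Δ 0 t ⬝ᵥ P *ᵥ (A *ᵥ Δ 0 t + Wk *ᵥ Δ k t)),
    fun t ht => hPsymm.hasDerivAt_dotProduct_mulVec_self (herr t ht), fun t _ => ?_⟩
  have hQ := hQF (Δ · t)
  have hS := nnLayer_sector_sum_nonpos (W := W) (b := b) hsec k (x₁ t) (x₂ t)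
  rw [hPsymm.dotProduct_lyapunov_mulVec] at hQ
  show 2 * (Δ 0 t ⬝ᵥ P *ᵥ (A *ᵥ Δ 0 t + Wk *ᵥ Δ k t)) ≤ -γ * (Δ 0 t ⬝ᵥ P *ᵥ Δ 0 t)
  rw [mulVec_add, dotProduct_add]
  linarith

/-- the Lyapunov function `V(t) = ⟨x₁(t) − x₂(t), P (x₁(t) − x₂(t))⟩` is
differentiable on `[0, ∞)` and satisfies `V′ ≤ −γ V` there. -/
theorem multilayer_node_lyapunov_decay
    (k : ℕ) (hk : 1 ≤ k) (m : ℕ → ℕ)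
    (A : Matrix (Fin (m 0)) (Fin (m 0)) ℝ)
    (W : (i : ℕ) → Matrix (Fin (m (i + 1))) (Fin (m i)) ℝ)
    (b : (i : ℕ) → Fin (m (i + 1)) → ℝ)
    (Wk : Matrix (Fin (m 0)) (Fin (m k)) ℝ) (bk : Fin (m 0) → ℝ)
    (φ : ℕ → ℝ → ℝ) (α β : ℕ → ℝ)
    (hsec : ∀ i, ∀ a c : ℝ,
      (φ i a - φ i c - α i * (a - c)) * (φ i a - φ i c - β i * (a - c)) ≤ 0)
    (P : Matrix (Fin (m 0)) (Fin (m 0)) ℝ) (hP : P.PosDef)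
    (γ : ℝ) (hγ : 0 < γ)
    (hQF : ∀ v : (i : ℕ) → Fin (m i) → ℝ,
      v 0 ⬝ᵥ (Aᵀ * P + P * A + γ • P).mulVec (v 0)
        + 2 * (v 0 ⬝ᵥ P.mulVec (Wk.mulVec (v k)))
        - 2 * ∑ i ∈ Finset.range k,
            (v (i + 1) - α i • (W i).mulVec (v i)) ⬝ᵥ
              (v (i + 1) - β i • (W i).mulVec (v i)) ≤ 0)
    (x₁ x₂ : ℝ → Fin (m 0) → ℝ)
    (hx₁ : ∀ t, 0 ≤ t → HasDerivAt x₁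
      (A.mulVec (x₁ t) + (Wk.mulVec (nnLayer m W b φ k (x₁ t)) + bk)) t)
    (hx₂ : ∀ t, 0 ≤ t → HasDerivAt x₂
      (A.mulVec (x₂ t) + (Wk.mulVec (nnLayer m W b φ k (x₂ t)) + bk)) t) :
    ∃ V' : ℝ → ℝ,
      (∀ t, 0 ≤ t →
        HasDerivAt (fun s => (x₁ s - x₂ s) ⬝ᵥ P.mulVec (x₁ s - x₂ s)) (V' t) t) ∧
      (∀ t, 0 ≤ t →
        V' t ≤ -γ * ((x₁ t - x₂ t) ⬝ᵥ P.mulVec (x₁ t - x₂ t))) :=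
  multilayer_node_lyapunov_decay_general k m A W b Wk bk φ α β hsec P hP γ hQF x₁ x₂ hx₁ hx₂
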